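/- With S₁, S₂, c₊, c₋, c as above, for every integer k and every v ∈ span S₂ one has c₊(cᵏ(v)) = -c^{1-k}(v). -/
import Mathlib


open scoped RealInnerProductSpace

lemma refl_prod_apply {n m : ℕ} (g : Fin m → EuclideanSpace ℝ (Fin n))
    (hg : ∀ i j, ⟪g i, g j⟫ = if i = j then 1 else 0)
    (u : Fin m → (EuclideanSpace ℝ (Fin n) ≃ₗᵢ[ℝ] EuclideanSpace ℝ (Fin n)))
    (hu : ∀ i x, u i x = x - (2 * ⟪x, g i⟫) • g i) (x : EuclideanSpace ℝ (Fin n)) :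
    (List.ofFn u).prod x = x - ∑ i, (2 * ⟪x, g i⟫) • g i := by
  induction m with
  | zero => simp
  | succ m ih =>
    rw [List.ofFn_succ, List.prod_cons]
    have hy := ih (fun i => g i.succ) (fun (i j : Fin m) => by rw [hg]; simp [Fin.succ_inj])
      (fun i => u i.succ) (fun i x => hu i.succ x)
    have hmul : (u 0 * (List.ofFn fun i => u i.succ).prod) x
        = u 0 ((List.ofFn fun i => u i.succ).prod x) := rfl
    rw [hmul, hy, hu]
    have hinner : ⟪x - ∑ i : Fin m, (2 * ⟪x, g i.succ⟫) • g i.succ, g 0⟫ = ⟪x, g 0⟫ := by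
      rw [inner_sub_left, sum_inner]
      have hz : ∀ i : Fin m, ⟪(2 * ⟪x, g i.succ⟫) • g i.succ, g 0⟫ = 0 := fun i => by
        rw [real_inner_smul_left, hg]
        simp [Fin.succ_ne_zero]
      simp only [hz, Finset.sum_const_zero, sub_zero]
    rw [hinner, Fin.sum_univ_succ]
    abel

lemma refl_prod_neg {n m : ℕ} (g : Fin m → EuclideanSpace ℝ (Fin n))
    (hg : ∀ i j, ⟪g i, g j⟫ = if i = j then 1 else 0)
    (u : Fin m → (EuclideanSpace ℝ (Fin n) ≃ₗᵢ[ℝ] EuclideanSpace ℝ (Fin n)))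
    (hu : ∀ i x, u i x = x - (2 * ⟪x, g i⟫) • g i) (v : EuclideanSpace ℝ (Fin n))
    (hv : v ∈ Submodule.span ℝ (Set.range g)) :
    (List.ofFn u).prod v = -v := by
  induction hv using Submodule.span_induction with
  | mem x hx =>
    obtain ⟨j, rfl⟩ := hx
    rw [refl_prod_apply g hg u hu]
    have hsum : ∑ i, (2 * ⟪g j, g i⟫) • g i = (2 : ℝ) • g j := by
      rw [Finset.sum_eq_single j]
      · rw [hg]; simp
      · intro i _ hij
        rw [hg]; simp [Ne.symm hij]
      · simp
    rw [hsum, two_smul]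
    abel
  | zero => simp
  | add x y _ _ hx hy => rw [map_add, hx, hy, neg_add]
  | smul a x _ hx => rw [map_smul, hx, smul_neg]

lemma refl_prod_invol {n m : ℕ} (g : Fin m → EuclideanSpace ℝ (Fin n))
    (hg : ∀ i j, ⟪g i, g j⟫ = if i = j then 1 else 0)
    (u : Fin m → (EuclideanSpace ℝ (Fin n) ≃ₗᵢ[ℝ] EuclideanSpace ℝ (Fin n)))
    (hu : ∀ i x, u i x = x - (2 * ⟪x, g i⟫) • g i) (x : EuclideanSpace ℝ (Fin n)) :
    (List.ofFn u).prod ((List.ofFn u).prod x) = x := by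
  rw [refl_prod_apply g hg u hu, refl_prod_apply g hg u hu]
  have h1 : ∀ i : Fin m, ⟪x - ∑ j, (2 * ⟪x, g j⟫) • g j, g i⟫ = -⟪x, g i⟫ := by
    intro i
    rw [inner_sub_left, sum_inner, Finset.sum_eq_single i]
    · rw [real_inner_smul_left, hg]; simp; ring
    · intro j _ hji
      rw [real_inner_smul_left, hg]; simp [hji]
    · simp
  simp only [h1, mul_neg, neg_smul, Finset.sum_neg_distrib, sub_neg_eq_add]
  abel

/-- Let `S₁ = {α₁,…,α_s}` and `S₂ = {α_{s+1},…,α_n}` be orthonormal sets of unit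
vectors in `ℝⁿ` whose union is linearly independent, with reflections
`R_i = R(α_i)`, `c₊ = R₁⋯R_s`, `c₋ = R_{s+1}⋯R_n` and `c = c₊ c₋`.  Then for every
integer `k`, for all `v` in the span of `S₂`, `c₊(cᵏ(v)) = -c^{1-k}(v)`. -/
theorem stmt_2 {n s : ℕ} (hs : s ≤ n) (α : Fin n → EuclideanSpace ℝ (Fin n))
    (horth₁ : ∀ i j : Fin n, i.val < s → j.val < s →
      ⟪α i, α j⟫ = if i = j then 1 else 0)
    (horth₂ : ∀ i j : Fin n, s ≤ i.val → s ≤ j.val →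
      ⟪α i, α j⟫ = if i = j then 1 else 0)
    (hind : LinearIndependent ℝ α)
    (R : Fin n → (EuclideanSpace ℝ (Fin n) ≃ₗᵢ[ℝ] EuclideanSpace ℝ (Fin n)))
    (hR : ∀ i x, R i x = x - (2 * ⟪x, α i⟫) • α i)
    (cp cm c : EuclideanSpace ℝ (Fin n) ≃ₗᵢ[ℝ] EuclideanSpace ℝ (Fin n))
    (hcp : cp = (List.ofFn fun i : Fin s => R (Fin.castLE hs i)).prod)
    (hcm : cm = (List.ofFn fun i : Fin (n - s) =>
      R ⟨s + i.val, by have := i.isLt; omega⟩).prod)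
    (hc : c = cp * cm) :
    ∀ (k : ℤ) (v : EuclideanSpace ℝ (Fin n)),
      v ∈ Submodule.span ℝ {x | ∃ i : Fin n, s ≤ i.val ∧ x = α i} →
        cp ((c ^ k) v) = -((c ^ (1 - k)) v) := by
  intro k v hv
  -- the two orthonormal families
  set g₁ : Fin s → EuclideanSpace ℝ (Fin n) := fun i => α (Fin.castLE hs i) with hg₁def
  set g₂ : Fin (n - s) → EuclideanSpace ℝ (Fin n) :=
    fun i => α ⟨s + i.val, by have := i.isLt; omega⟩ with hg₂def
  have hg₁ : ∀ i j, ⟪g₁ i, g₁ j⟫ = if i = j then 1 else 0 := by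
    intro i j
    rw [hg₁def]
    rw [horth₁ _ _ i.isLt j.isLt]
    congr 1
    simp [Fin.ext_iff]
  have hg₂ : ∀ i j, ⟪g₂ i, g₂ j⟫ = if i = j then 1 else 0 := by
    intro i j
    rw [hg₂def]
    rw [horth₂ _ _ (by exact Nat.le_add_right _ _) (by exact Nat.le_add_right _ _)]
    congr 1
    simp [Fin.ext_iff]
  have hu₁ : ∀ (i : Fin s) x, R (Fin.castLE hs i) x = x - (2 * ⟪x, g₁ i⟫) • g₁ i :=
    fun i x => hR _ x
  have hu₂ : ∀ (i : Fin (n - s)) x,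
      R ⟨s + i.val, by have := i.isLt; omega⟩ x = x - (2 * ⟪x, g₂ i⟫) • g₂ i :=
    fun i x => hR _ x
  -- involutions
  have hcp2 : cp * cp = 1 := by
    refine LinearIsometryEquiv.ext fun x => ?_
    have := refl_prod_invol g₁ hg₁ _ hu₁ x
    show cp (cp x) = x
    rw [hcp]
    exact this
  have hcm2 : cm * cm = 1 := by
    refine LinearIsometryEquiv.ext fun x => ?_
    have := refl_prod_invol g₂ hg₂ _ hu₂ x
    show cm (cm x) = x
    rw [hcm]
    exact this
  -- cm acts as -1 on the span
  have hset : {x | ∃ i : Fin n, s ≤ i.val ∧ x = α i} = Set.range g₂ := by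
    ext y
    constructor
    · rintro ⟨i, hi, rfl⟩
      exact ⟨⟨i.val - s, by omega⟩, by rw [hg₂def]; exact congrArg α (Fin.ext (by simp only [Fin.val_mk]; omega))⟩
    · rintro ⟨j, rfl⟩
      exact ⟨⟨s + j.val, by have := j.isLt; omega⟩, by exact Nat.le_add_right _ _, rfl⟩
  have hcmv : cm v = -v := by
    rw [hcm]
    exact refl_prod_neg g₂ hg₂ _ hu₂ v (by rw [← hset]; exact hv)
  -- group computation
  have hcm_inv : cm⁻¹ = cm := by
    rw [inv_eq_of_mul_eq_one_right hcm2]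
  have h1 : cp * c = c⁻¹ * cp := by
    rw [hc, mul_inv_rev, hcm_inv, ← mul_assoc, hcp2, one_mul, mul_assoc]
    rw [inv_mul_cancel, mul_one]
  have hsemi : SemiconjBy cp c c⁻¹ := h1
  have h2 : cp * c ^ k = c ^ (-k) * cp := by
    have := (hsemi.zpow_right k).eq
    rw [this, inv_zpow, ← zpow_neg]
  have happ : cp ((c ^ k) v) = (c ^ (-k)) (cp v) := by
    have : (cp * c ^ k) v = (c ^ (-k) * cp) v := by rw [h2]
    exact this
  have hcv : c v = -(cp v) := by
    rw [hc]
    show cp (cm v) = -(cp v)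
    rw [hcmv, map_neg]
  have hpow : c ^ (1 - k) = c ^ (-k) * c := by
    rw [show (1 : ℤ) - k = -k + 1 from by ring, zpow_add, zpow_one]
  rw [happ, hpow]
  show _ = -((c ^ (-k)) (c v))
  rw [hcv, map_neg, neg_neg]
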